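/- arXiv:1912.11864 — 2 statements merged into one kernel-verified Lean document; each statement's English description precedes it below -/
import Mathlib

section
/- (Chainkilling.) Let k ≥ 1, let φ be a Boolean function on V = {0,...,k}, and let ν ≠ ν' be two valuations such that there is a simple path ν = ν_0 − ν_1 − ... − ν_n − ν_{n+1} = ν' from ν to ν' in the hypercube graph G_V, with n ≥ 0 and ν_i ∉ sat(φ) for all 1 ≤ i ≤ n. If (−1)^{|ν|} ≠ (−1)^{|ν'|} and both ν and ν' belong to sat(φ), then the Boolean function φ' defined by sat(φ') = sat(φ) \ {ν, ν'} satisfies φ →±* φ' (in particular φ ≃ φ'). -/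
open scoped Classical

/-- Flip the membership of variable `l` in valuation `ν`. -/
def flipV {k : ℕ} (ν : Finset (Fin (k + 1))) (l : Fin (k + 1)) : Finset (Fin (k + 1)) :=
  if l ∈ ν then ν.erase l else insert l ν

lemma flipV_flipV {k : ℕ} (ν : Finset (Fin (k + 1))) (l : Fin (k + 1)) :
    flipV (flipV ν l) l = ν := by
  unfold flipV
  by_cases h : l ∈ ν
  · simp [h, Finset.insert_erase h]
  · simp [h, Finset.erase_insert h]

lemma flipV_ne {k : ℕ} (ν : Finset (Fin (k + 1))) (l : Fin (k + 1)) :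
    flipV ν l ≠ ν := by
  unfold flipV
  by_cases h : l ∈ ν
  · simp only [h, if_true]
    intro he
    exact (Finset.notMem_erase l ν) (he.symm ▸ h)
  · simp only [h, if_false]
    intro he
    exact h (he ▸ Finset.mem_insert_self l ν)

/-- `φ →+ φ'`: there are `ν, l` with `ν ∉ sat(φ)`, `ν^(l) ∉ sat(φ)` and
`sat(φ') = sat(φ) ∪ {ν, ν^(l)}`. -/
def StepPlus (k : ℕ) (φ φ' : Finset (Fin (k + 1)) → Bool) : Prop :=
  ∃ (ν : Finset (Fin (k + 1))) (l : Fin (k + 1)),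
    φ ν = false ∧ φ (flipV ν l) = false ∧
    ∀ μ, (φ' μ = true ↔ φ μ = true ∨ μ = ν ∨ μ = flipV ν l)

/-- `φ →− φ'`: remove two adjacent satisfying valuations. -/
def StepMinus (k : ℕ) (φ φ' : Finset (Fin (k + 1)) → Bool) : Prop :=
  StepPlus k φ' φ

/-- `φ →± φ'`. -/
def StepPM (k : ℕ) (φ φ' : Finset (Fin (k + 1)) → Bool) : Prop :=
  StepPlus k φ φ' ∨ StepMinus k φ φ'

/-- The relation `≃` (equivalently `→±*`): the reflexive transitive closure of `→±`. -/
def EquivPM (k : ℕ) (φ φ' : Finset (Fin (k + 1)) → Bool) : Prop :=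
  Relation.ReflTransGen (StepPM k) φ φ'

/-- The hypercube graph `G_V` on the valuations of `V = {0,...,k}`: there is an edge
between `ν` and `ν^(l)` for every valuation `ν` and variable `l`. -/
def hypercube (k : ℕ) : SimpleGraph (Finset (Fin (k + 1))) where
  Adj ν μ := ∃ l, μ = flipV ν l
  symm := by
    constructor
    rintro ν μ ⟨l, rfl⟩
    exact ⟨l, (flipV_flipV ν l).symm⟩
  loopless := by
    constructor
    rintro ν ⟨l, h⟩
    exact flipV_ne ν l h.symm

/-!
Proof idea: move the satisfying valuation `ν` along the path, two edges at a time. If the path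
starts `u - w₁ - w₂` with `u` satisfying and `w₁, w₂` not, adding the edge `{w₁, w₂}` and then
removing the edge `{u, w₁}` moves the satisfying valuation from `u` to `w₂`. Flipping a variable
changes the parity of `|ν|`, so the path has odd length, and the process ends with a single edge
between two satisfying valuations, which is removed in one step.
-/

namespace Hypercube

variable {k : ℕ}

lemma neg_one_pow_card_flipV (ν : Finset (Fin (k + 1))) (l : Fin (k + 1)) :
    (-1 : ℤ) ^ (flipV ν l).card = -(-1 : ℤ) ^ ν.card := by
  unfold flipV
  split_ifs with h
  · rw [← Finset.card_erase_add_one h, pow_succ, mul_neg_one, neg_neg]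
  · rw [Finset.card_insert_of_notMem h, pow_succ, mul_neg_one]

lemma neg_one_pow_card_of_walk {u v : Finset (Fin (k + 1))} (p : (hypercube k).Walk u v) :
    (-1 : ℤ) ^ v.card = (-1 : ℤ) ^ u.card * (-1) ^ p.length := by
  induction p with
  | nil => simp
  | cons h q ih =>
    rw [SimpleGraph.Walk.length_cons, ih]
    obtain ⟨l, rfl⟩ := h
    rw [neg_one_pow_card_flipV]
    ring

lemma neg_one_pow_card_ne_iff_odd_length {u v : Finset (Fin (k + 1))}
    (p : (hypercube k).Walk u v) :
    (-1 : ℤ) ^ u.card ≠ (-1 : ℤ) ^ v.card ↔ Odd p.length := by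
  rw [neg_one_pow_card_of_walk p]
  rcases Nat.even_or_odd p.length with h | h
  · simp [h.neg_one_pow, Nat.not_odd_iff_even.mpr h]
  · rcases neg_one_pow_eq_or ℤ u.card with h' | h' <;> simp [h.neg_one_pow, h', h]

lemma ne_of_odd_length {u v : Finset (Fin (k + 1))} (p : (hypercube k).Walk u v)
    (hodd : Odd p.length) : u ≠ v := by
  rintro rfl
  exact (neg_one_pow_card_ne_iff_odd_length p).mpr hodd rfl

lemma stepPlus_of_adj {φ φ' : Finset (Fin (k + 1)) → Bool} {u v : Finset (Fin (k + 1))}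
    (huv : (hypercube k).Adj u v) (hu : φ u = false) (hv : φ v = false)
    (hφ' : ∀ μ, φ' μ = true ↔ φ μ = true ∨ μ = u ∨ μ = v) :
    StepPlus k φ φ' := by
  obtain ⟨l, rfl⟩ := huv
  exact ⟨u, l, hu, hv, hφ'⟩

lemma stepPM_remove_edge {φ φ' : Finset (Fin (k + 1)) → Bool} {u v : Finset (Fin (k + 1))}
    (huv : (hypercube k).Adj u v) (hu : φ u = true) (hv : φ v = true)
    (hφ' : ∀ μ, φ' μ = true ↔ φ μ = true ∧ μ ≠ u ∧ μ ≠ v) :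
    StepPM k φ φ' := by
  refine Or.inr (stepPlus_of_adj huv (by simpa using hφ' u) (by simpa using hφ' v) fun μ ↦ ?_)
  by_cases hμu : μ = u
  · simp [hμu, hu]
  by_cases hμv : μ = v
  · simp [hμv, hv]
  simp [hφ', hμu, hμv]

lemma reflTransGen_stepPM_move {φ φ' : Finset (Fin (k + 1)) → Bool}
    {u w₁ w₂ : Finset (Fin (k + 1))} (h₁ : (hypercube k).Adj u w₁) (h₂ : (hypercube k).Adj w₁ w₂)
    (hu : φ u = true) (hw₁ : φ w₁ = false) (hw₂ : φ w₂ = false)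
    (hφ' : ∀ μ, φ' μ = true ↔ (φ μ = true ∨ μ = w₂) ∧ μ ≠ u) :
    Relation.ReflTransGen (StepPM k) φ φ' := by
  let φ₁ : Finset (Fin (k + 1)) → Bool := fun μ ↦ decide (φ μ = true ∨ μ = w₁ ∨ μ = w₂)
  have add : StepPlus k φ φ₁ := stepPlus_of_adj h₂ hw₁ hw₂ (by simp [φ₁])
  refine .head (.inl add) (.single (stepPM_remove_edge h₁ (by simp [φ₁, hu]) (by simp [φ₁])
    fun μ ↦ ?_))
  rw [hφ' μ]
  by_cases hμw₁ : μ = w₁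
  · simp [φ₁, hμw₁, hw₁, h₂.ne]
  simp [φ₁, hμw₁]

theorem reflTransGen_stepPM_of_isPath :
    ∀ {u v : Finset (Fin (k + 1))} (p : (hypercube k).Walk u v), p.IsPath → Odd p.length →
    ∀ φ φ' : Finset (Fin (k + 1)) → Bool,
    (∀ μ ∈ p.support, μ ≠ u → μ ≠ v → φ μ = false) → φ u = true → φ v = true →
    (∀ μ, φ' μ = true ↔ φ μ = true ∧ μ ≠ u ∧ μ ≠ v) →
    Relation.ReflTransGen (StepPM k) φ φ'
  | _, _, .nil, _, hodd, _, _, _, _, _, _ => absurd hodd (by simp)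
  | _, _, .cons h .nil, _, _, _, _, _, hu, hv, hφ' =>
    .single (stepPM_remove_edge h hu hv hφ')
  | u, v, .cons (v := w₁) h₁ (.cons (v := w₂) h₂ r), hpath, hodd, φ, φ', hint, hu, hv, hφ' => by
    simp only [SimpleGraph.Walk.cons_isPath_iff, SimpleGraph.Walk.support_cons,
      List.mem_cons, not_or] at hpath
    obtain ⟨⟨hr, hw₁r⟩, -, hur⟩ := hpath
    have hodd_r : Odd r.length := by
      simpa [SimpleGraph.Walk.length_cons, Nat.odd_add_one, parity_simps] using hodd
    have huv : u ≠ v := ne_of_odd_length _ hodd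
    have huw₂ : u ≠ w₂ := fun h ↦ hur (h ▸ r.start_mem_support)
    have hw₂v : w₂ ≠ v := ne_of_odd_length r hodd_r
    have hφw₁ : φ w₁ = false := hint w₁ (by simp) h₁.ne.symm fun h ↦ hw₁r (h ▸ r.end_mem_support)
    have hφw₂ : φ w₂ = false := hint w₂ (by simp) huw₂.symm hw₂v
    let φ₂ : Finset (Fin (k + 1)) → Bool := fun μ ↦ decide ((φ μ = true ∨ μ = w₂) ∧ μ ≠ u)
    refine (reflTransGen_stepPM_move h₁ h₂ hu hφw₁ hφw₂ (by simp [φ₂])).trans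
      (reflTransGen_stepPM_of_isPath r hr hodd_r φ₂ φ' ?_ (by simp [φ₂, huw₂.symm])
        (by simp [φ₂, hv, huv.symm]) fun μ ↦ ?_)
    · intro μ hμ hμw₂ hμv
      have hμu : μ ≠ u := fun h ↦ hur (h ▸ hμ)
      simp [φ₂, hμw₂, hint μ (by simp [hμ]) hμu hμv]
    · rw [hφ' μ]
      by_cases hμw₂ : μ = w₂
      · simp [hμw₂, hφw₂]
      simp only [φ₂, decide_eq_true_iff, hμw₂, or_false]
      tauto

end Hypercube

theorem stmt7_general (k : ℕ) (φ φ' : Finset (Fin (k + 1)) → Bool)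
    (ν ν' : Finset (Fin (k + 1)))
    (p : (hypercube k).Walk ν ν') (hpath : p.IsPath)
    (hint : ∀ μ ∈ p.support, μ ≠ ν → μ ≠ ν' → φ μ = false)
    (hpar : ((-1 : ℤ) ^ ν.card ≠ (-1 : ℤ) ^ ν'.card))
    (hν : φ ν = true) (hν' : φ ν' = true)
    (hφ' : ∀ μ, φ' μ = true ↔ (φ μ = true ∧ μ ≠ ν ∧ μ ≠ ν')) :
    Relation.ReflTransGen (StepPM k) φ φ' :=
  Hypercube.reflTransGen_stepPM_of_isPath p hpath
    ((Hypercube.neg_one_pow_card_ne_iff_odd_length p).mp hpar) φ φ' hint hν hν' hφ'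

/-- Chainkilling: if there is a simple path from `ν` to `ν'` in `G_V` whose
internal vertices do not satisfy `φ`, with `(-1)^{|ν|} ≠ (-1)^{|ν'|}` and `ν, ν' ∈ sat(φ)`,
then the function `φ'` with `sat(φ') = sat(φ) \ {ν, ν'}` satisfies `φ →±* φ'`. -/
theorem stmt7 (k : ℕ) (hk : 1 ≤ k) (φ φ' : Finset (Fin (k + 1)) → Bool)
    (ν ν' : Finset (Fin (k + 1))) (hne : ν ≠ ν')
    (p : (hypercube k).Walk ν ν') (hpath : p.IsPath)
    (hint : ∀ μ ∈ p.support, μ ≠ ν → μ ≠ ν' → φ μ = false)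
    (hpar : ((-1 : ℤ) ^ ν.card ≠ (-1 : ℤ) ^ ν'.card))
    (hν : φ ν = true) (hν' : φ ν' = true)
    (hφ' : ∀ μ, φ' μ = true ↔ (φ μ = true ∧ μ ≠ ν ∧ μ ≠ ν')) :
    Relation.ReflTransGen (StepPM k) φ φ' :=
  stmt7_general k φ φ' ν ν' p hpath hint hpar hν hν' hφ'
end

section
/- Let k ≥ 1 and let φ be a Boolean function on V = {0,...,k} with eul(φ) ≥ 0. Then there exists a Boolean function φ_min on V with φ_min ≃ φ such that every satisfying valuation of φ_min has even size. -/
/-!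
The Euler characteristic is invariant under `≃`, since the two valuations added or removed by a
step have sizes of opposite parity. Conversely, as long as `φ` has a satisfying valuation `ν` of
odd size, `eul φ ≥ 0` provides one, `μ`, of even size. Moving `μ` two steps towards `ν` at a time
(add the pair `{μ^(l), μ^(l)(l')}` and remove `{μ, μ^(l)}`, or the other way round) preserves the
parity of `μ` and the odd satisfying valuations; once `μ` is adjacent to `ν` the pair `{ν, μ}` is
removed. This lowers the number of odd satisfying valuations, and induction on that number ends
with a function all of whose satisfying valuations are even.
-/

open scoped Classical

/-- The set of satisfying valuations of a Boolean function on `V = {0,...,k}`. -/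
def satSet {k : ℕ} (φ : Finset (Fin (k + 1)) → Bool) : Finset (Finset (Fin (k + 1))) :=
  Finset.univ.filter (fun ν => φ ν = true)

/-- The Euler characteristic of a Boolean function: `Σ_{ν ⊨ φ} (-1)^{|ν|}`. -/
def eul {k : ℕ} (φ : Finset (Fin (k + 1)) → Bool) : ℤ :=
  ∑ ν ∈ satSet φ, (-1 : ℤ) ^ ν.card

section Flip

variable {k : ℕ} {ν μ : Finset (Fin (k + 1))} {l : Fin (k + 1)}

lemma flipV_eq_symmDiff (ν : Finset (Fin (k + 1))) (l : Fin (k + 1)) :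
    flipV ν l = symmDiff ν {l} := by
  ext m
  by_cases hm : m = l <;> by_cases hl : l ∈ ν <;> simp_all [flipV, Finset.mem_symmDiff]

lemma flipV_of_mem (h : l ∈ ν) : flipV ν l = ν.erase l := if_pos h

lemma even_card_flipV : Even (flipV ν l).card ↔ Odd ν.card := by
  unfold flipV
  split_ifs with hl
  · rw [← Finset.card_erase_add_one hl, Nat.odd_add_one, Nat.not_odd_iff_even]
  · rw [Finset.card_insert_of_notMem hl, Nat.even_add_one, Nat.not_even_iff_odd]

lemma odd_card_flipV : Odd (flipV ν l).card ↔ Even ν.card := by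
  rw [← Nat.not_even_iff_odd, even_card_flipV, Nat.not_odd_iff_even]

lemma flipV_ne_self : flipV ν l ≠ ν := by
  intro h
  have h' := even_card_flipV (ν := ν) (l := l)
  rw [h, ← Nat.not_even_iff_odd] at h'
  exact iff_not_self h'

lemma neg_one_pow_card_flipV : (-1 : ℤ) ^ (flipV ν l).card = -(-1) ^ ν.card := by
  rcases Nat.even_or_odd ν.card with he | ho
  · rw [(odd_card_flipV.2 he).neg_one_pow, he.neg_one_pow]
  · rw [(even_card_flipV.2 ho).neg_one_pow, ho.neg_one_pow, neg_neg]

lemma symmDiff_flipV : symmDiff ν (flipV μ l) = flipV (symmDiff ν μ) l := by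
  simp only [flipV_eq_symmDiff, symmDiff_assoc]

lemma card_symmDiff_flipV (h : l ∈ symmDiff ν μ) :
    (symmDiff ν (flipV μ l)).card = (symmDiff ν μ).card - 1 := by
  rw [symmDiff_flipV, flipV_of_mem h, Finset.card_erase_of_mem h]

lemma eq_flipV_of_symmDiff_eq_singleton (h : symmDiff ν μ = {l}) : μ = flipV ν l := by
  rw [flipV_eq_symmDiff, ← h, symmDiff_symmDiff_cancel_left]

end Flip

section EulerCharacteristic

variable {k : ℕ} {φ φ' : Finset (Fin (k + 1)) → Bool}

lemma mem_satSet {ν : Finset (Fin (k + 1))} : ν ∈ satSet φ ↔ φ ν = true := by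
  simp [satSet]

lemma StepPlus.eul_eq (h : StepPlus k φ φ') : eul φ' = eul φ := by
  obtain ⟨ν, l, hν, hflip, hφ'⟩ := h
  have hsat : satSet φ' = insert ν (insert (flipV ν l) (satSet φ)) := by
    ext μ
    simp only [mem_satSet, Finset.mem_insert, hφ' μ]
    tauto
  have hν' : ν ∉ insert (flipV ν l) (satSet φ) := by
    simp [mem_satSet, hν, flipV_ne_self.symm]
  have hflip' : flipV ν l ∉ satSet φ := by simp [mem_satSet, hflip]
  rw [eul, hsat, Finset.sum_insert hν', Finset.sum_insert hflip', neg_one_pow_card_flipV,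
    add_neg_cancel_left, eul]

lemma EquivPM.eul_eq (h : EquivPM k φ φ') : eul φ' = eul φ := by
  induction h with
  | refl => rfl
  | tail _ hstep ih =>
    rcases hstep with hplus | hminus
    · rw [hplus.eul_eq, ih]
    · rw [← hminus.eul_eq, ih]

instance : Std.Symm (StepPM k) where
  symm _ _ := Or.symm

lemma EquivPM.symm (h : EquivPM k φ φ') : EquivPM k φ' φ :=
  Std.Symm.symm (r := Relation.ReflTransGen (StepPM k)) _ _ h

lemma EquivPM.trans {φ'' : Finset (Fin (k + 1)) → Bool} (h : EquivPM k φ φ')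
    (h' : EquivPM k φ' φ'') : EquivPM k φ φ'' :=
  Relation.ReflTransGen.trans h h'

end EulerCharacteristic

section SatSet

variable {k : ℕ} {S : Finset (Finset (Fin (k + 1)))} {ν μ : Finset (Fin (k + 1))}
  {l l' : Fin (k + 1)}

def ofSatSet (S : Finset (Finset (Fin (k + 1)))) : Finset (Fin (k + 1)) → Bool :=
  fun ν => decide (ν ∈ S)

lemma satSet_ofSatSet : satSet (ofSatSet S) = S := by
  ext ν
  simp [satSet, ofSatSet]

lemma ofSatSet_satSet (φ : Finset (Fin (k + 1)) → Bool) : ofSatSet (satSet φ) = φ := by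
  funext ν
  simp [satSet, ofSatSet]

lemma eul_ofSatSet : eul (ofSatSet S) = ∑ ν ∈ S, (-1 : ℤ) ^ ν.card := by
  rw [eul, satSet_ofSatSet]

lemma stepPlus_ofSatSet (hν : ν ∉ S) (hflip : flipV ν l ∉ S) :
    StepPlus k (ofSatSet S) (ofSatSet (S ∪ {ν, flipV ν l})) :=
  ⟨ν, l, by simpa [ofSatSet] using hν, by simpa [ofSatSet] using hflip,
    fun μ => by simp only [ofSatSet, decide_eq_true_eq, Finset.mem_union, Finset.mem_insert,
      Finset.mem_singleton]⟩

lemma equivPM_union_pair (hν : ν ∉ S) (hflip : flipV ν l ∉ S) :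
    EquivPM k (ofSatSet S) (ofSatSet (S ∪ {ν, flipV ν l})) :=
  .single (.inl (stepPlus_ofSatSet hν hflip))

lemma equivPM_sdiff_pair (hν : ν ∈ S) (hflip : flipV ν l ∈ S) :
    EquivPM k (ofSatSet S) (ofSatSet (S \ {ν, flipV ν l})) := by
  have h := stepPlus_ofSatSet (S := S \ {ν, flipV ν l}) (ν := ν) (l := l) (by simp) (by simp)
  rw [Finset.sdiff_union_of_subset (by simp [Finset.insert_subset_iff, hν, hflip])] at h
  exact .single (.inr h)

lemma equivPM_insert_erase (hll' : l ≠ l') (hν : ν ∈ S) (hc : flipV (flipV ν l) l' ∉ S) :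
    EquivPM k (ofSatSet S) (ofSatSet (insert (flipV (flipV ν l) l') (S.erase ν))) := by
  set b := flipV ν l
  set c := flipV b l'
  have hbν : b ≠ ν := flipV_ne_self
  have hcb : c ≠ b := flipV_ne_self
  have hcν : c ≠ ν := by
    have hlc : l ∈ c ↔ l ∉ ν := by simp [c, b, flipV_eq_symmDiff, Finset.mem_symmDiff, hll']
    intro h
    rw [h] at hlc
    exact iff_not_self hlc
  by_cases hb : b ∈ S
  · have h := (equivPM_sdiff_pair hν hb).trans
      (equivPM_union_pair (S := S \ {ν, b}) (ν := b) (l := l') (by simp)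
        (Finset.notMem_sdiff_of_notMem_left hc))
    convert h using 2
    ext x
    simp only [Finset.mem_insert, Finset.mem_erase, Finset.mem_union, Finset.mem_sdiff]
    grind
  · have h := (equivPM_union_pair hb hc).trans
      (equivPM_sdiff_pair (S := S ∪ {b, c}) (ν := ν) (l := l) (by simp [hν])
        (by simp [b]))
    convert h using 2
    ext x
    simp only [Finset.mem_insert, Finset.mem_erase, Finset.mem_union, Finset.mem_sdiff]
    grind

end SatSet

lemma exists_even_card_mem {α : Type*} {S : Finset (Finset α)}
    (h : 0 ≤ ∑ ν ∈ S, (-1 : ℤ) ^ ν.card) (hS : S.Nonempty) :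
    ∃ μ ∈ S, Even μ.card := by
  by_contra! hodd
  have hsum : ∑ ν ∈ S, (-1 : ℤ) ^ ν.card = -S.card := by
    rw [Finset.sum_congr rfl fun ν hν => (Nat.not_even_iff_odd.1 (hodd ν hν)).neg_one_pow]
    simp
  have := hS.card_pos
  omega

section Parity

variable {α : Type*} [DecidableEq α] {S : Finset (Finset α)} {ν μ : Finset α}

def oddPart (S : Finset (Finset α)) : Finset (Finset α) :=
  S.filter (fun ν => Odd ν.card)

lemma oddPart_sdiff_pair_of_even (hμ : Even μ.card) :
    oddPart (S \ {ν, μ}) = (oddPart S).erase ν := by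
  ext x
  simp only [oddPart, Finset.mem_filter, Finset.mem_sdiff, Finset.mem_insert,
    Finset.mem_singleton, Finset.mem_erase]
  have hμ' := Nat.not_odd_iff_even.2 hμ
  grind

lemma oddPart_insert_erase_of_even (hν : Even ν.card) (hμ : Even μ.card) :
    oddPart (insert μ (S.erase ν)) = oddPart S := by
  ext x
  simp only [oddPart, Finset.mem_filter, Finset.mem_insert, Finset.mem_erase]
  have hν' := Nat.not_odd_iff_even.2 hν
  have hμ' := Nat.not_odd_iff_even.2 hμ
  grind

end Parity

section Reduction

variable {k : ℕ} {S : Finset (Finset (Fin (k + 1)))} {ν μ : Finset (Fin (k + 1))}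

theorem exists_equivPM_card_oddPart_lt (hν : ν ∈ S) (hνodd : Odd ν.card) (hμ : μ ∈ S)
    (hμeven : Even μ.card) :
    ∃ T, EquivPM k (ofSatSet S) (ofSatSet T) ∧ (oddPart T).card < (oddPart S).card := by
  induction hd : (symmDiff ν μ).card using Nat.strong_induction_on generalizing S μ with
  | _ d ih =>
  have hne : (symmDiff ν μ).Nonempty :=
    Finset.symmDiff_nonempty.2 fun h => Nat.not_even_iff_odd.2 hνodd (h ▸ hμeven)
  obtain ⟨l, hl⟩ | hnontriv := hne.exists_eq_singleton_or_nontrivial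
  · obtain rfl := eq_flipV_of_symmDiff_eq_singleton hl
    refine ⟨S \ {ν, flipV ν l}, equivPM_sdiff_pair hν hμ, ?_⟩
    rw [oddPart_sdiff_pair_of_even hμeven]
    exact Finset.card_erase_lt_of_mem (Finset.mem_filter.2 ⟨hν, hνodd⟩)
  obtain ⟨l, hl, l', hl', hll'⟩ := hnontriv
  set c := flipV (flipV μ l) l'
  have hceven : Even c.card := even_card_flipV.2 (odd_card_flipV.2 hμeven)
  have hdc : (symmDiff ν c).card < d := by
    have hl'' : l' ∈ symmDiff ν (flipV μ l) := by
      rw [symmDiff_flipV, flipV_of_mem hl]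
      exact Finset.mem_erase.2 ⟨Ne.symm hll', hl'⟩
    have := Finset.card_pos.2 ⟨l, hl⟩
    rw [card_symmDiff_flipV hl'', card_symmDiff_flipV hl]
    omega
  by_cases hc : c ∈ S
  · exact ih _ hdc hν hc hceven rfl
  have hνμ : ν ≠ μ := Finset.symmDiff_nonempty.1 ⟨l, hl⟩
  obtain ⟨T, hT, hlt⟩ := ih _ hdc (S := insert c (S.erase μ))
    (Finset.mem_insert_of_mem (Finset.mem_erase.2 ⟨hνμ, hν⟩)) (Finset.mem_insert_self c _)
    hceven rfl
  refine ⟨T, (equivPM_insert_erase hll' hμ hc).trans hT, ?_⟩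
  rwa [oddPart_insert_erase_of_even hμeven hceven] at hlt

theorem exists_equivPM_forall_even_card (h : 0 ≤ eul (ofSatSet S)) :
    ∃ T, EquivPM k (ofSatSet S) (ofSatSet T) ∧ ∀ ν ∈ T, Even ν.card := by
  induction hn : (oddPart S).card using Nat.strong_induction_on generalizing S with
  | _ n ih =>
  by_cases hodd : ∃ ν ∈ S, Odd ν.card
  · obtain ⟨ν, hν, hνodd⟩ := hodd
    obtain ⟨μ, hμ, hμeven⟩ := exists_even_card_mem (eul_ofSatSet ▸ h) ⟨ν, hν⟩
    obtain ⟨T, hST, hlt⟩ := exists_equivPM_card_oddPart_lt hν hνodd hμ hμeven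
    obtain ⟨U, hTU, hU⟩ := ih _ (hn ▸ hlt) (hST.eul_eq ▸ h) rfl
    exact ⟨U, hST.trans hTU, hU⟩
  · push Not at hodd
    exact ⟨S, .refl, fun ν hν => Nat.not_odd_iff_even.1 (hodd ν hν)⟩

end Reduction

theorem stmt12_general (k : ℕ) (φ : Finset (Fin (k + 1)) → Bool)
    (h : 0 ≤ eul φ) :
    ∃ φmin : Finset (Fin (k + 1)) → Bool,
      EquivPM k φmin φ ∧ ∀ ν, φmin ν = true → Even ν.card := by
  obtain ⟨T, hT, heven⟩ :=
    exists_equivPM_forall_even_card (S := satSet φ) (by rwa [ofSatSet_satSet])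
  rw [ofSatSet_satSet] at hT
  exact ⟨ofSatSet T, hT.symm, fun ν hν => heven ν (by simpa [ofSatSet] using hν)⟩

/-- if `eul(φ) ≥ 0` then there is `φ_min ≃ φ` all of whose satisfying
valuations have even size. -/
theorem stmt12 (k : ℕ) (hk : 1 ≤ k) (φ : Finset (Fin (k + 1)) → Bool)
    (h : 0 ≤ eul φ) :
    ∃ φmin : Finset (Fin (k + 1)) → Bool,
      EquivPM k φmin φ ∧ ∀ ν, φmin ν = true → Even ν.card :=
  stmt12_general k φ h
end
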